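/- For each point x with ||x||_1 = 1 in Z^d, there is exactly one point z with ||z - x||_1 = 1 such that the set A_d(z) = {y : ||y||_1 = 1 and ||y - z||_1 = 1} has exactly one element (namely z = 2x, with A_d(z) = {x}); and for every other point w ≠ z, w ≠ 0 with ||w - x||_1 = 1, the set A_d(w) has exactly two elements. -/
import Mathlib


/-- The l¹ norm on the lattice `ℤ^d`. -/
def norm1 {d : ℕ} (x : Fin d → ℤ) : ℕ := ∑ i, (x i).natAbs

lemma norm1_single {d : ℕ} (i : Fin d) (c : ℤ) : norm1 (Pi.single i c) = c.natAbs := by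
  unfold norm1
  rw [Finset.sum_eq_single i]
  · simp
  · intro j _ hj; simp [Pi.single_eq_of_ne hj]
  · simp

lemma norm1_eq_one_iff {d : ℕ} {y : Fin d → ℤ} :
    norm1 y = 1 ↔ ∃ i c, c.natAbs = 1 ∧ y = Pi.single i c := by
  constructor
  · intro h
    have hne : ∃ i, (y i).natAbs ≠ 0 := by
      by_contra hcon
      push_neg at hcon
      have : norm1 y = 0 := Finset.sum_eq_zero fun i _ => hcon i
      omega
    obtain ⟨i, hi⟩ := hne
    have hsplit : (y i).natAbs + ∑ j ∈ Finset.univ.erase i, (y j).natAbs = 1 := by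
      rw [Finset.add_sum_erase Finset.univ (fun j => (y j).natAbs) (Finset.mem_univ i)]
      exact h
    have h1 : (y i).natAbs = 1 := by omega
    have h0 : ∑ j ∈ Finset.univ.erase i, (y j).natAbs = 0 := by omega
    refine ⟨i, y i, h1, ?_⟩
    funext j
    by_cases hj : j = i
    · subst hj; simp
    · have hz := (Finset.sum_eq_zero_iff.mp h0) j (by simp [hj])
      rw [Pi.single_eq_of_ne hj]
      omega
  · rintro ⟨i, c, hc, rfl⟩
    rw [norm1_single]; exact hc

lemma norm1_add_of_disjoint {d : ℕ} (f g : Fin d → ℤ) (h : ∀ k, f k = 0 ∨ g k = 0) :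
    norm1 (f + g) = norm1 f + norm1 g := by
  unfold norm1
  rw [← Finset.sum_add_distrib]
  refine Finset.sum_congr rfl fun k _ => ?_
  rcases h k with h | h <;> simp [h]

lemma norm1_pair {d : ℕ} {i j : Fin d} (hij : i ≠ j) (a b : ℤ) :
    norm1 (Pi.single i a + Pi.single j b) = a.natAbs + b.natAbs := by
  rw [norm1_add_of_disjoint, norm1_single, norm1_single]
  intro k
  by_cases hk : k = i
  · subst hk; right; exact Pi.single_eq_of_ne hij _
  · left; exact Pi.single_eq_of_ne hk _

lemma single_sub_single {d : ℕ} (i : Fin d) (a b : ℤ) :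
    (Pi.single i a : Fin d → ℤ) - Pi.single i b = Pi.single i (a - b) := by
  funext m
  simp only [Pi.sub_apply, Pi.single_apply]
  split_ifs <;> ring

lemma single_sub_pair {d : ℕ} (i j : Fin d) (a b s : ℤ) :
    (Pi.single i a : Fin d → ℤ) - (Pi.single i b + Pi.single j s)
      = Pi.single i (a - b) + Pi.single j (-s) := by
  funext m
  simp only [Pi.sub_apply, Pi.add_apply, Pi.single_apply]
  split_ifs <;> ring

lemma single_sub_pair' {d : ℕ} (i j k : Fin d) (a b s : ℤ) (hki : k ≠ i) (hkj : k ≠ j) :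
    (Pi.single k a : Fin d → ℤ) - (Pi.single i b + Pi.single j s)
      = Pi.single k a + (Pi.single i (-b) + Pi.single j (-s)) := by
  funext m
  simp only [Pi.sub_apply, Pi.add_apply, Pi.single_apply]
  split_ifs <;> ring

/-- The set of common neighbours of `0` and `2x` is `{x}`. -/
lemma A_double {d : ℕ} (i : Fin d) {c : ℤ} (hc : c.natAbs = 1) :
    {y : Fin d → ℤ | norm1 y = 1 ∧ norm1 (y - (Pi.single i c + Pi.single i c)) = 1}
      = {Pi.single i c} := by
  have h2 : (Pi.single i c : Fin d → ℤ) + Pi.single i c = Pi.single i (2 * c) := by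
    rw [← Pi.single_add, ← two_mul]
  rw [h2]
  ext y
  simp only [Set.mem_setOf_eq, Set.mem_singleton_iff]
  constructor
  · rintro ⟨h1, hdist⟩
    obtain ⟨k, b, hb, rfl⟩ := norm1_eq_one_iff.mp h1
    by_cases hk : k = i
    · subst hk
      rw [single_sub_single, norm1_single] at hdist
      have : b = c := by omega
      rw [this]
    · exfalso
      have : (Pi.single k b : Fin d → ℤ) - Pi.single i (2 * c)
          = Pi.single k b + Pi.single i (-(2 * c)) := by
        funext m
        simp only [Pi.sub_apply, Pi.add_apply, Pi.single_apply]
        split_ifs <;> ring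
      rw [this, norm1_pair hk] at hdist
      omega
  · rintro rfl
    refine ⟨by rw [norm1_single]; exact hc, ?_⟩
    rw [single_sub_single, norm1_single]
    omega

/-- The set of common neighbours of `0` and `x + s·e_j` (`j ≠ i`) is a pair. -/
lemma A_pair {d : ℕ} {i j : Fin d} (hji : j ≠ i) {c s : ℤ} (hc : c.natAbs = 1)
    (hs : s.natAbs = 1) :
    {y : Fin d → ℤ | norm1 y = 1 ∧ norm1 (y - (Pi.single i c + Pi.single j s)) = 1}
      = {Pi.single i c, Pi.single j s} := by
  ext y
  simp only [Set.mem_setOf_eq, Set.mem_insert_iff, Set.mem_singleton_iff]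
  constructor
  · rintro ⟨h1, hdist⟩
    obtain ⟨k, b, hb, rfl⟩ := norm1_eq_one_iff.mp h1
    by_cases hki : k = i
    · subst hki
      rw [single_sub_pair, norm1_add_of_disjoint, norm1_single, norm1_single] at hdist
      · left
        have : b = c := by omega
        rw [this]
      · intro m
        by_cases hm : m = k
        · right; subst hm; exact Pi.single_eq_of_ne (Ne.symm hji) _
        · left; exact Pi.single_eq_of_ne hm _
    · by_cases hkj : k = j
      · rw [add_comm (Pi.single i c : Fin d → ℤ) (Pi.single j s)] at hdist
        subst hkj
        rw [single_sub_pair, norm1_add_of_disjoint, norm1_single, norm1_single] at hdist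
        · right
          have : b = s := by omega
          rw [this]
        · intro m
          by_cases hm : m = k
          · right; subst hm; exact Pi.single_eq_of_ne hki _
          · left; exact Pi.single_eq_of_ne hm _
      · exfalso
        rw [single_sub_pair' i j k b c s hki hkj, norm1_add_of_disjoint,
          norm1_single, norm1_pair (fun h => hji h.symm)] at hdist
        · omega
        · intro m
          by_cases hm : m = k
          · right; subst hm
            simp [Pi.single_eq_of_ne hki, Pi.single_eq_of_ne hkj]
          · left; exact Pi.single_eq_of_ne hm _
  · rintro (rfl | rfl)
    · refine ⟨by rw [norm1_single]; exact hc, ?_⟩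
      rw [single_sub_pair, norm1_add_of_disjoint, norm1_single, norm1_single]
      · omega
      · intro m
        by_cases hm : m = i
        · right; subst hm; exact Pi.single_eq_of_ne (Ne.symm hji) _
        · left; exact Pi.single_eq_of_ne hm _
    · refine ⟨by rw [norm1_single]; exact hs, ?_⟩
      rw [add_comm (Pi.single i c : Fin d → ℤ) (Pi.single j s), single_sub_pair, norm1_add_of_disjoint,
        norm1_single, norm1_single]
      · omega
      · intro m
        by_cases hm : m = j
        · right; subst hm; exact Pi.single_eq_of_ne hji _
        · left; exact Pi.single_eq_of_ne hm _

set_option maxHeartbeats 1000000 in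
/-- For each `x` with `‖x‖₁ = 1` there is exactly one point `z` with `‖z - x‖₁ = 1`
whose set `A_d(z)` of common nearest neighbours with the origin is a singleton, namely
`z = 2x` with `A_d(z) = {x}`; any other neighbour `w ≠ 0` of `x` has `|A_d(w)| = 2`. -/
theorem stmt0 {d : ℕ} (hd : 1 ≤ d) (x : Fin d → ℤ) (hx : norm1 x = 1) :
    (∃! z : Fin d → ℤ, norm1 (z - x) = 1 ∧
        ({y : Fin d → ℤ | norm1 y = 1 ∧ norm1 (y - z) = 1}).ncard = 1) ∧
    (norm1 ((x + x) - x) = 1 ∧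
        {y : Fin d → ℤ | norm1 y = 1 ∧ norm1 (y - (x + x)) = 1} = {x}) ∧
    (∀ w : Fin d → ℤ, norm1 (w - x) = 1 → w ≠ x + x → w ≠ 0 →
        ({y : Fin d → ℤ | norm1 y = 1 ∧ norm1 (y - w) = 1}).ncard = 2) := by
  obtain ⟨i, c, hc, rfl⟩ := norm1_eq_one_iff.mp hx
  have hc0 : c ≠ 0 := by omega
  -- classification of neighbours of x
  have hnb : ∀ w : Fin d → ℤ, norm1 (w - Pi.single i c) = 1 →
      w = Pi.single i c + Pi.single i c ∨ w = 0 ∨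
      ∃ j s, j ≠ i ∧ s.natAbs = 1 ∧ w = Pi.single i c + Pi.single j s := by
    intro w hw
    obtain ⟨j, s, hs, he⟩ := norm1_eq_one_iff.mp hw
    have hw' : w = Pi.single i c + Pi.single j s := by
      have := sub_eq_iff_eq_add.mp he
      rw [this, add_comm]
    by_cases hji : j = i
    · subst hji
      have hcs : s = c ∨ s = -c := by omega
      rcases hcs with rfl | rfl
      · left; exact hw'
      · right; left
        rw [hw', ← Pi.single_add]
        simp
    · right; right; exact ⟨j, s, hji, hs, hw'⟩
  -- distinctness of singles
  have hdist : ∀ j : Fin d, j ≠ i → ∀ s : ℤ, (Pi.single i c : Fin d → ℤ) ≠ Pi.single j s := by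
    intro j hji s h
    have := congrFun h i
    rw [Pi.single_eq_same, Pi.single_eq_of_ne (Ne.symm hji)] at this
    exact hc0 this
  have hsimple : norm1 ((Pi.single i c + Pi.single i c) - Pi.single i c) = 1 := by
    have : ((Pi.single i c : Fin d → ℤ) + Pi.single i c) - Pi.single i c = Pi.single i c := by abel
    rw [this, norm1_single]; exact hc
  refine ⟨⟨Pi.single i c + Pi.single i c, ⟨hsimple, ?_⟩, ?_⟩, ⟨hsimple, A_double i hc⟩, ?_⟩
  · rw [A_double i hc, Set.ncard_singleton]
  · -- uniqueness
    rintro z ⟨hz1, hz2⟩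
    rcases hnb z hz1 with rfl | rfl | ⟨j, s, hji, hs, rfl⟩
    · rfl
    · exfalso
      have hset : {y : Fin d → ℤ | norm1 y = 1 ∧ norm1 (y - 0) = 1}
          = {y : Fin d → ℤ | norm1 y = 1} := by
        ext y; simp
      rw [hset] at hz2
      obtain ⟨a, ha⟩ := Set.ncard_eq_one.mp hz2
      have h1 : Pi.single i c ∈ {y : Fin d → ℤ | norm1 y = 1} := by
        simp only [Set.mem_setOf_eq]; rw [norm1_single]; exact hc
      have h2 : Pi.single i (-c) ∈ {y : Fin d → ℤ | norm1 y = 1} := by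
        simp only [Set.mem_setOf_eq]; rw [norm1_single]; omega
      rw [ha] at h1 h2
      have : (Pi.single i c : Fin d → ℤ) = Pi.single i (-c) := by
        rw [Set.mem_singleton_iff.mp h1, Set.mem_singleton_iff.mp h2]
      have := congrFun this i
      rw [Pi.single_eq_same, Pi.single_eq_same] at this
      omega
    · exfalso
      rw [A_pair hji hc hs] at hz2
      rw [Set.ncard_pair (hdist j hji s)] at hz2
      omega
  · -- every other neighbour has a 2-element common neighbourhood
    intro w hw1 hw2 hw3
    rcases hnb w hw1 with rfl | rfl | ⟨j, s, hji, hs, rfl⟩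
    · exact absurd rfl hw2
    · exact absurd rfl hw3
    · rw [A_pair hji hc hs]
      exact Set.ncard_pair (hdist j hji s)
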